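/- arXiv:1609.04587 — 2 statements merged into one kernel-verified Lean document; each statement's English description precedes it below -/
import Mathlib

section
/- Normalization integral: if λ is a positive zero of J_0, then ∫_0^1 x J_0(λ x)² dx = J_1(λ)²/2. -/
/-- Bessel function of the first kind of natural order `n`. -/
noncomputable def besselJN (n : ℕ) (x : ℝ) : ℝ :=
  ∑' m : ℕ, ((-1) ^ m / (m.factorial * (m + n).factorial)) * (x / 2) ^ (2 * m + n)

/-!
Differentiating the defining series term by term gives `J₀' = -J₁` and `(t J₁(t))' = t J₀(t)`.
Hence `t ↦ t² (J₀(λt)² + J₁(λt)²) / 2` is an antiderivative of `t J₀(λt)²` for `λ ≠ 0`, so the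
integral equals `(J₀(λ)² + J₁(λ)²) / 2`, which is `J₁(λ)² / 2` at a zero of `J₀`.
-/

open Nat

lemma natCast_mul_abs_pow_pred_le {M x : ℝ} (hM : 1 ≤ M) (hx : |x| ≤ M) (j : ℕ) :
    j * |x| ^ (j - 1) ≤ (2 * M) ^ j := by
  have hj : (j : ℝ) ≤ 2 ^ j := by exact_mod_cast j.lt_two_pow_self.le
  have hpow : |x| ^ (j - 1) ≤ M ^ j :=
    (pow_le_pow_left₀ (abs_nonneg x) hx _).trans (pow_le_pow_right₀ hM (j.sub_le 1))
  rw [mul_pow]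
  exact mul_le_mul hj hpow (by positivity) (by positivity)

theorem hasDerivAt_tsum_mul_pow_two_mul_add {c : ℕ → ℝ} {C : ℝ} (hc : ∀ m, |c m| ≤ C / m !)
    (k : ℕ) (t : ℝ) :
    HasDerivAt (fun s => ∑' m, c m * s ^ (2 * m + k))
      (∑' m, c m * ((2 * m + k : ℕ) * t ^ (2 * m + k - 1))) t := by
  set R := |t| + 1
  have hR : 1 ≤ R := le_add_of_nonneg_left (abs_nonneg t)
  set u : ℕ → ℝ := fun m => C / m ! * (2 * R) ^ (2 * m + k)
  have hu : Summable u :=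
    ((Real.summable_pow_div_factorial ((2 * R) ^ 2)).mul_left (C * (2 * R) ^ k)).congr fun m => by
      simp only [u, pow_add, pow_mul]; ring
  have hbound : ∀ m, ∀ x ∈ Metric.ball (0 : ℝ) R,
      ‖c m * ((2 * m + k : ℕ) * x ^ (2 * m + k - 1))‖ ≤ u m := by
    intro m x hx
    have hxR : |x| ≤ R := (mem_ball_zero_iff.mp hx).le
    rw [Real.norm_eq_abs, abs_mul, abs_mul, abs_pow, Nat.abs_cast]
    exact mul_le_mul (hc m) (natCast_mul_abs_pow_pred_le hR hxR _) (by positivity)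
      ((abs_nonneg _).trans (hc m))
  refine hasDerivAt_tsum_of_isPreconnected hu Metric.isOpen_ball (convex_ball 0 R).isPreconnected
    (fun m x _ => (hasDerivAt_pow _ x).const_mul (c m)) hbound
    (Metric.mem_ball_self (by positivity)) (hu.of_norm_bounded fun m => ?_) (by simp [R])
  have h0 : |(0 : ℝ) ^ (2 * m + k)| ≤ (2 * R) ^ (2 * m + k) := by
    rw [abs_pow, abs_zero]
    exact (pow_le_one₀ le_rfl zero_le_one).trans (one_le_pow₀ (by linarith))
  rw [Real.norm_eq_abs, abs_mul]
  exact mul_le_mul (hc m) h0 (abs_nonneg _) ((abs_nonneg _).trans (hc m))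

lemma abs_neg_one_pow_div_factorial_mul_le (n m : ℕ) :
    |(-1 : ℝ) ^ m / (m ! * (m + n)!)| ≤ 1 / m ! := by
  rw [abs_div, abs_pow, abs_neg, abs_one, one_pow, abs_of_pos (by positivity)]
  gcongr
  exact le_mul_of_one_le_right (by positivity) (by exact_mod_cast (m + n).factorial_pos)

theorem hasDerivAt_besselJN_zero (x : ℝ) : HasDerivAt (besselJN 0) (-besselJN 1 x) x := by
  have h := (hasDerivAt_tsum_mul_pow_two_mul_add (abs_neg_one_pow_div_factorial_mul_le 0) 0
    (x / 2)).comp x ((hasDerivAt_id x).div_const 2)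
  refine HasDerivAt.congr_deriv (f := besselJN 0) h ?_
  -- the `m = 0` term vanishes, and the shift `m ↦ m + 1` matches the terms of `-J₁`
  rw [besselJN, ← tsum_neg, ← tsum_mul_right, ← Nat.succ_injective.tsum_eq]
  · congr 1
    funext m
    have he : 2 * (m + 1) + 0 - 1 = 2 * m + 1 := by omega
    simp only [Nat.succ_eq_add_one, he, Nat.factorial_succ]
    push_cast
    field_simp
    ring
  · rintro (_ | m) hm
    · simp at hm
    · exact ⟨m, rfl⟩

theorem hasDerivAt_mul_besselJN_one (x : ℝ) :
    HasDerivAt (fun t => t * besselJN 1 t) (x * besselJN 0 x) x := by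
  have hc (m : ℕ) : |2 * ((-1 : ℝ) ^ m / (m ! * (m + 1)!))| ≤ 2 / m ! := by
    calc |2 * ((-1 : ℝ) ^ m / (m ! * (m + 1)!))|
        = 2 * |(-1 : ℝ) ^ m / (m ! * (m + 1)!)| := by rw [abs_mul, abs_two]
      _ ≤ 2 * (1 / m !) := by gcongr; exact abs_neg_one_pow_div_factorial_mul_le 1 m
      _ = 2 / m ! := mul_one_div 2 _
  have h := (hasDerivAt_tsum_mul_pow_two_mul_add hc 2 (x / 2)).comp x
    ((hasDerivAt_id x).div_const 2)
  have hfun : (fun t => t * besselJN 1 t) =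
      (fun s => ∑' m, 2 * ((-1 : ℝ) ^ m / (m ! * (m + 1)!)) * s ^ (2 * m + 2)) ∘
        (fun t => id t / 2) := by
    funext t
    simp only [Function.comp_apply, id, besselJN, ← tsum_mul_left]
    congr 1
    funext m
    ring
  rw [hfun]
  refine h.congr_deriv ?_
  rw [besselJN, ← tsum_mul_left, ← tsum_mul_right]
  congr 1
  funext m
  have he : 2 * m + 2 - 1 = 2 * m + 1 := by omega
  simp only [Nat.factorial_succ, add_zero, he, pow_succ]
  push_cast
  field_simp

theorem hasDerivAt_lommel_antideriv {l : ℝ} (hl : l ≠ 0) (x : ℝ) :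
    HasDerivAt (fun t => (t ^ 2 * besselJN 0 (l * t) ^ 2 + (t * besselJN 1 (l * t)) ^ 2) / 2)
      (x * besselJN 0 (l * x) ^ 2) x := by
  have hlx : HasDerivAt (fun t => l * t) l x := by simpa using (hasDerivAt_id x).const_mul l
  have hJ0 : HasDerivAt (fun t => besselJN 0 (l * t)) (-besselJN 1 (l * x) * l) x :=
    (hasDerivAt_besselJN_zero (l * x)).comp x hlx
  have hJ1 : HasDerivAt (fun t => t * besselJN 1 (l * t)) (l * x * besselJN 0 (l * x)) x := by
    have hscale :
        (fun t => t * besselJN 1 (l * t)) = fun t => l⁻¹ * (l * t * besselJN 1 (l * t)) := by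
      funext t
      field_simp
    rw [hscale]
    refine (((hasDerivAt_mul_besselJN_one (l * x)).comp x hlx).const_mul l⁻¹).congr_deriv ?_
    field_simp
  refine ((((hasDerivAt_pow 2 x).mul (hJ0.pow 2)).add (hJ1.pow 2)).div_const 2).congr_deriv ?_
  norm_num
  ring

theorem integral_mul_besselJN_zero_sq {l : ℝ} (hl : l ≠ 0) :
    ∫ x in (0 : ℝ)..1, x * besselJN 0 (l * x) ^ 2 = (besselJN 0 l ^ 2 + besselJN 1 l ^ 2) / 2 := by
  have hJ0 : Continuous (besselJN 0) :=
    continuous_iff_continuousAt.2 fun x => (hasDerivAt_besselJN_zero x).continuousAt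
  have hint : IntervalIntegrable (fun x => x * besselJN 0 (l * x) ^ 2) MeasureTheory.volume 0 1 :=
    (continuous_id.mul ((hJ0.comp (continuous_const_mul l)).pow 2)).intervalIntegrable 0 1
  rw [intervalIntegral.integral_eq_sub_of_hasDerivAt (fun x _ => hasDerivAt_lommel_antideriv hl x)
    hint]
  simp

/-- Normalization: if `λ > 0` is a zero of `J₀`, then `∫_0^1 x J₀(λx)² dx = J₁(λ)²/2`. -/
theorem besselJ0_norm (l : ℝ) (hl : 0 < l) (hz : besselJN 0 l = 0) :
    ∫ x in (0:ℝ)..1, x * besselJN 0 (l * x) ^ 2 = besselJN 1 l ^ 2 / 2 := by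
  rw [integral_mul_besselJN_zero_sq hl.ne', hz]
  ring
end

section
/- Uniqueness for the inverse initial problem: suppose u is continuous on [0,1]×[0,T], has uniformly convergent Fourier-Bessel expansion u(x,t) = Σ u_k(t) J_0(λ_k x) with each u_k satisfying ^cD^α u_k + λ_k² u_k = 0 on (0,T), and u(x,T) = 0 for all x ∈ [0,1]. Then u ≡ 0 on [0,1]×[0,T] and in particular u(·,0) ≡ 0. -/
/-!
Evaluating the expansion at `t = T` gives a series `∑ u_k(T) J₀(λ_k x)` converging uniformly to
`0` on `[0, 1]`. Integrating it against `x J₀(λ_j x)` and using the orthogonality of the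
`J₀(λ_k x)` for the weight `x` (a Lagrange identity for Bessel's equation) leaves
`u_j(T) ∫₀¹ x J₀(λ_j x)² dx = 0`, so `u_j(T) = 0`. Since `u_j(T) = u_j(0) E_α(-λ_j² T^α)` and
the Mittag-Leffler factor is positive, `u_j(0) = 0`; hence every `u_j` vanishes on `[0, T]`, and
so does `u`, being the uniform limit of the partial sums.
-/

/-- The (real) Mittag-Leffler function `E_α(x) = ∑ x^k / Γ(αk+1)`. -/
noncomputable def mlReal (a x : ℝ) : ℝ :=
  ∑' k : ℕ, x ^ k / Real.Gamma (a * k + 1)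

/-- Caputo fractional derivative of order `α`. -/
noncomputable def caputo (a : ℝ) (f : ℝ → ℝ) (t : ℝ) : ℝ :=
  (1 / Real.Gamma (1 - a)) * ∫ τ in (0:ℝ)..t, deriv f τ / (t - τ) ^ a

open Filter Set Topology
open scoped Interval

noncomputable def powSeries (c : ℕ → ℝ) (y : ℝ) : ℝ := ∑' m, c m * y ^ m

def derivCoeff (c : ℕ → ℝ) (m : ℕ) : ℝ := (m + 1) * c (m + 1)

lemma natCast_mul_pow_pred_le {z R : ℝ} (hz : |z| ≤ R) (m : ℕ) :
    m * |z| ^ (m - 1) ≤ (2 * (R + 1)) ^ m := by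
  have hR : 1 ≤ R + 1 := by linarith [abs_nonneg z]
  rw [mul_pow]
  gcongr
  · exact_mod_cast Nat.lt_two_pow_self.le
  · calc |z| ^ (m - 1) ≤ (R + 1) ^ (m - 1) := by gcongr; linarith
      _ ≤ (R + 1) ^ m := pow_le_pow_right₀ hR (Nat.sub_le m 1)

section Entire

variable {c : ℕ → ℝ}

lemma summable_abs_mul_pow (hc : ∀ r : ℝ, Summable fun m => c m * r ^ m) {r : ℝ} (hr : 0 ≤ r) :
    Summable fun m => |c m| * r ^ m := by
  simpa [abs_mul, abs_pow, abs_of_nonneg hr] using (hc r).abs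

lemma summable_natCast_mul_mul_pow (hc : ∀ r : ℝ, Summable fun m => c m * r ^ m) (r : ℝ) :
    Summable fun m => (m * c m) * r ^ m := by
  refine Summable.of_norm_bounded (summable_abs_mul_pow hc (by positivity : (0 : ℝ) ≤ 2 * |r|))
    fun m => ?_
  rw [Real.norm_eq_abs, abs_mul, abs_mul, abs_pow, Nat.abs_cast, mul_pow, mul_comm (m : ℝ),
    mul_assoc]
  gcongr
  exact_mod_cast Nat.lt_two_pow_self.le

theorem hasDerivAt_powSeries (hc : ∀ r : ℝ, Summable fun m => c m * r ^ m) (y : ℝ) :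
    HasDerivAt (powSeries c) (powSeries (derivCoeff c) y) y := by
  set R := |y| + 1
  have hu : Summable fun m => |c m| * (2 * (R + 1)) ^ m := summable_abs_mul_pow hc (by positivity)
  have hbound : ∀ m, ∀ z ∈ Metric.ball (0 : ℝ) R,
      ‖c m * (m * z ^ (m - 1))‖ ≤ |c m| * (2 * (R + 1)) ^ m := fun m z hz => by
    rw [Real.norm_eq_abs, abs_mul, abs_mul, abs_pow, Nat.abs_cast]
    gcongr
    exact natCast_mul_pow_pred_le (by simpa using (mem_ball_zero_iff.mp hz).le) m
  have hy : y ∈ Metric.ball (0 : ℝ) R := by simp [R]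
  have hderiv := hasDerivAt_tsum_of_isPreconnected hu Metric.isOpen_ball
    (convex_ball (0 : ℝ) R).isPreconnected
    (fun m z _ => (hasDerivAt_pow m z).const_mul (c m)) hbound hy (hc y) hy
  have hshift : (∑' m, c m * (m * y ^ (m - 1))) = powSeries (derivCoeff c) y := by
    rw [(Summable.of_norm_bounded hu fun m => hbound m y hy).tsum_eq_zero_add]
    simp [powSeries, derivCoeff, mul_left_comm, mul_assoc]
  exact hshift ▸ hderiv

lemma mul_powSeries_derivCoeff (hc : ∀ r : ℝ, Summable fun m => c m * r ^ m) (y : ℝ) :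
    y * powSeries (derivCoeff c) y = powSeries (fun m => m * c m) y := by
  rw [powSeries, powSeries, (summable_natCast_mul_mul_pow hc y).tsum_eq_zero_add,
    ← tsum_mul_left]
  simp only [derivCoeff, CharP.cast_eq_zero, zero_mul, zero_add, Nat.cast_add, Nat.cast_one]
  exact tsum_congr fun m => by ring

end Entire

/- `J₀(x) = besselF (x² / 4)` and `besselH y = y besselF' y`; in the variable `y = x² / 4`,
Bessel's equation `x J₀'' + J₀' + x J₀ = 0` becomes `besselH' = -besselF`. -/
noncomputable def besselCoeff (m : ℕ) : ℝ := (-1) ^ m / (m.factorial : ℝ) ^ 2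

noncomputable def besselF : ℝ → ℝ := powSeries besselCoeff

noncomputable def besselH : ℝ → ℝ := powSeries fun m => m * besselCoeff m

lemma besselJN_zero_eq_besselF (x : ℝ) : besselJN 0 x = besselF (x ^ 2 / 4) := by
  refine tsum_congr fun m => ?_
  rw [besselCoeff, add_zero, add_zero, pow_mul, div_pow]
  ring

lemma summable_besselCoeff_mul_pow (r : ℝ) : Summable fun m => besselCoeff m * r ^ m := by
  refine Summable.of_norm_bounded (Real.summable_pow_div_factorial |r|) fun m => ?_
  have hm : (1 : ℝ) ≤ m.factorial := by exact_mod_cast m.factorial_pos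
  simp only [besselCoeff, norm_mul, norm_div, norm_pow, norm_neg, norm_one, one_pow,
    Real.norm_eq_abs, Nat.abs_cast, one_div_mul_eq_div]
  exact div_le_div_of_nonneg_left (by positivity) (by positivity) (by nlinarith)

lemma derivCoeff_natCast_mul_besselCoeff (m : ℕ) :
    derivCoeff (fun m => m * besselCoeff m) m = -besselCoeff m := by
  rw [derivCoeff, besselCoeff, besselCoeff, Nat.factorial_succ]
  push_cast
  field_simp
  ring

lemma hasDerivAt_besselF (y : ℝ) :
    HasDerivAt besselF (powSeries (derivCoeff besselCoeff) y) y :=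
  hasDerivAt_powSeries summable_besselCoeff_mul_pow y

lemma mul_deriv_besselF (y : ℝ) : y * powSeries (derivCoeff besselCoeff) y = besselH y :=
  mul_powSeries_derivCoeff summable_besselCoeff_mul_pow y

lemma hasDerivAt_besselH (y : ℝ) : HasDerivAt besselH (-besselF y) y := by
  have hderiv : powSeries (derivCoeff fun m => m * besselCoeff m) y = -besselF y := by
    simp only [powSeries, besselF, derivCoeff_natCast_mul_besselCoeff, neg_mul, tsum_neg]
  exact hderiv ▸
    hasDerivAt_powSeries (summable_natCast_mul_mul_pow summable_besselCoeff_mul_pow) y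

lemma besselF_zero : besselF 0 = 1 := by
  rw [besselF, powSeries, tsum_eq_single 0 (fun m hm => by simp [hm])]
  simp [besselCoeff]

@[fun_prop] lemma continuous_besselF : Continuous besselF :=
  continuous_iff_continuousAt.mpr fun y => (hasDerivAt_besselF y).continuousAt

lemma hasDerivAt_besselWronskian (b c x : ℝ) :
    HasDerivAt
      (fun x => besselF ((b * x) ^ 2 / 4) * besselH ((c * x) ^ 2 / 4)
        - besselH ((b * x) ^ 2 / 4) * besselF ((c * x) ^ 2 / 4))
      ((b ^ 2 - c ^ 2) / 2 * (x * (besselF ((b * x) ^ 2 / 4) * besselF ((c * x) ^ 2 / 4)))) x := by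
  have hsq : ∀ d : ℝ, HasDerivAt (fun x => (d * x) ^ 2 / 4) (d ^ 2 * x / 2) x := fun d => by
    refine ((((hasDerivAt_id x).const_mul d).pow 2).div_const 4).congr_deriv ?_
    simp only [id_eq]
    ring
  have hF := fun d => (hasDerivAt_besselF ((d * x) ^ 2 / 4)).comp x (hsq d)
  have hH := fun d => (hasDerivAt_besselH ((d * x) ^ 2 / 4)).comp x (hsq d)
  refine (((hF b).mul (hH c)).sub ((hH b).mul (hF c))).congr_deriv ?_
  simp only [Function.comp_apply]
  linear_combination
    powSeries (derivCoeff besselCoeff) ((c * x) ^ 2 / 4) * (c ^ 2 * x / 2) *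
        mul_deriv_besselF ((b * x) ^ 2 / 4)
      - powSeries (derivCoeff besselCoeff) ((b * x) ^ 2 / 4) * (b ^ 2 * x / 2) *
        mul_deriv_besselF ((c * x) ^ 2 / 4)

@[fun_prop] lemma continuous_besselJN_zero : Continuous (besselJN 0) := by
  simp_rw [funext besselJN_zero_eq_besselF]
  fun_prop

lemma integral_mul_besselJN_zero_mul_eq_zero {b c : ℝ} (hb : besselJN 0 b = 0)
    (hc : besselJN 0 c = 0) (hbc : b ^ 2 ≠ c ^ 2) :
    ∫ x in (0 : ℝ)..1, x * (besselJN 0 (b * x) * besselJN 0 (c * x)) = 0 := by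
  rw [besselJN_zero_eq_besselF] at hb hc
  simp_rw [besselJN_zero_eq_besselF]
  have h := intervalIntegral.integral_eq_sub_of_hasDerivAt
    (fun x _ => hasDerivAt_besselWronskian b c x)
    (Continuous.intervalIntegrable (by fun_prop) 0 1)
  simp only [intervalIntegral.integral_const_mul, mul_one, mul_zero, hb, hc] at h
  exact (mul_eq_zero.mp (h.trans (by ring))).resolve_left
    (div_ne_zero (sub_ne_zero.mpr hbc) two_ne_zero)

lemma integral_mul_besselJN_zero_mul_self_pos (b : ℝ) :
    0 < ∫ x in (0 : ℝ)..1, x * (besselJN 0 (b * x) * besselJN 0 (b * x)) := by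
  have hcont : Continuous fun x => besselJN 0 (b * x) := by fun_prop
  have h0 : besselJN 0 (b * 0) ≠ 0 := by simp [besselJN_zero_eq_besselF, besselF_zero]
  obtain ⟨x, hx, hx_mem⟩ := (((hcont.continuousAt.eventually_ne h0).filter_mono
    nhdsWithin_le_nhds).and (Ioc_mem_nhdsGT zero_lt_one)).exists
  refine intervalIntegral.integral_pos zero_lt_one (by fun_prop)
    (fun y hy => mul_nonneg hy.1.le (mul_self_nonneg _)) ⟨x, Ioc_subset_Icc_self hx_mem, ?_⟩
  exact mul_pos hx_mem.1 (mul_self_pos.mpr hx)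

lemma tendsto_intervalIntegral_mul_of_tendstoUniformlyOn_zero {ι : Type*} {l : Filter ι}
    [l.IsCountablyGenerated] {a b : ℝ} {F : ι → ℝ → ℝ} {g : ℝ → ℝ}
    (hF : ∀ i, ContinuousOn (F i) [[a, b]]) (hg : ContinuousOn g [[a, b]])
    (hlim : TendstoUniformlyOn F 0 l [[a, b]]) :
    Tendsto (fun i => ∫ x in a..b, F i x * g x) l (𝓝 0) := by
  obtain ⟨C, hC⟩ := isCompact_uIcc.exists_bound_of_continuousOn hg
  have hC0 : 0 ≤ C := (norm_nonneg _).trans (hC a left_mem_uIcc)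
  have hprod : TendstoUniformlyOn (fun i x => F i x * g x) 0 l [[a, b]] := by
    refine Metric.tendstoUniformlyOn_iff.mpr fun ε hε => ?_
    filter_upwards [Metric.tendstoUniformlyOn_iff.mp hlim (ε / (C + 1)) (by positivity)]
      with i hi x hx
    have hFx := hi x hx
    rw [Pi.zero_apply, dist_zero_left] at hFx ⊢
    calc ‖F i x * g x‖ = ‖F i x‖ * ‖g x‖ := norm_mul _ _
      _ ≤ ε / (C + 1) * C := mul_le_mul hFx.le (hC x hx) (norm_nonneg _) (by positivity)
      _ < ε := by rw [div_mul_eq_mul_div, div_lt_iff₀ (by positivity)]; nlinarith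
  simpa using hprod.tendsto_intervalIntegral_of_continuousOn
    (Eventually.of_forall fun i => (hF i).mul hg)

theorem coeff_eq_zero_of_tendstoUniformlyOn_zero {a b : ℝ} {w : ℝ → ℝ} {φ : ℕ → ℝ → ℝ}
    {c : ℕ → ℝ} {j : ℕ} (hw : Continuous w) (hφ : ∀ k, Continuous (φ k))
    (horth : ∀ k ≠ j, ∫ x in a..b, w x * (φ k x * φ j x) = 0)
    (hnorm : ∫ x in a..b, w x * (φ j x * φ j x) ≠ 0)
    (hlim : TendstoUniformlyOn (fun n x => ∑ k ∈ Finset.range n, c k * φ k x) 0 atTop [[a, b]]) :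
    c j = 0 := by
  have hpartial : ∀ n, j < n →
      ∫ x in a..b, (∑ k ∈ Finset.range n, c k * φ k x) * (w x * φ j x)
        = c j * ∫ x in a..b, w x * (φ j x * φ j x) := fun n hn => by
    simp_rw [Finset.sum_mul]
    rw [intervalIntegral.integral_finsetSum fun k _ =>
      (Continuous.intervalIntegrable (by fun_prop) _ _)]
    simp_rw [fun k x => show c k * φ k x * (w x * φ j x) = c k * (w x * (φ k x * φ j x)) by ring,
      intervalIntegral.integral_const_mul]
    exact Finset.sum_eq_single_of_mem j (Finset.mem_range.mpr hn) fun k _ hk => by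
      rw [horth k hk, mul_zero]
  have hzero := tendsto_intervalIntegral_mul_of_tendstoUniformlyOn_zero
    (fun n => (Continuous.continuousOn (by fun_prop))) (hw.mul (hφ j)).continuousOn hlim
  have hconst := hzero.congr' ((eventually_gt_atTop j).mono hpartial)
  exact (mul_eq_zero.mp (tendsto_nhds_unique tendsto_const_nhds hconst)).resolve_right hnorm

theorem inverse_initial_uniqueness_general
    (a T : ℝ) (hT : 0 < T)
    (lam : ℕ → ℝ) (hmono : StrictMono lam)
    (hzero : ∀ k, 0 < lam k ∧ besselJN 0 (lam k) = 0)
    (u : ℝ → ℝ → ℝ) (uc : ℕ → ℝ → ℝ)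
    (hconv : TendstoUniformlyOn
      (fun n p => ∑ k ∈ Finset.range n, uc k p.2 * besselJN 0 (lam k * p.1))
      (fun p : ℝ × ℝ => u p.1 p.2) Filter.atTop (Set.Icc 0 1 ×ˢ Set.Icc 0 T))
    (hsol : ∀ k, ∀ t ∈ Set.Icc 0 T, uc k t = uc k 0 * mlReal a (-(lam k ^ 2) * t ^ a))
    (hEpos : ∀ k, 0 < mlReal a (-(lam k ^ 2) * T ^ a))
    (hfinal : ∀ x ∈ Set.Icc (0:ℝ) 1, u x T = 0) :
    ∀ x ∈ Set.Icc (0:ℝ) 1, ∀ t ∈ Set.Icc 0 T, u x t = 0 := by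
  have hTmem : T ∈ Icc 0 T := right_mem_Icc.mpr hT.le
  have hlimT : TendstoUniformlyOn
      (fun n x => ∑ k ∈ Finset.range n, uc k T * besselJN 0 (lam k * x)) 0 atTop [[0, 1]] := by
    rw [uIcc_of_le zero_le_one]
    exact ((hconv.comp fun x => (x, T)).mono fun x hx => mk_mem_prod hx hTmem).congr_right
      fun x hx => hfinal x hx
  have hsq_ne : ∀ {j} k, k ≠ j → lam k ^ 2 ≠ lam j ^ 2 := fun {j} k hk h =>
    hk (hmono.injective ((pow_left_inj₀ (hzero k).1.le (hzero j).1.le two_ne_zero).mp h))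
  have hcoefT : ∀ j, uc j T = 0 := fun j =>
    coeff_eq_zero_of_tendstoUniformlyOn_zero (w := fun x => x) continuous_id (fun k => by fun_prop)
      (fun k hk => integral_mul_besselJN_zero_mul_eq_zero (hzero k).2 (hzero j).2 (hsq_ne k hk))
      (integral_mul_besselJN_zero_mul_self_pos _).ne' hlimT
  have hcoef : ∀ k, ∀ t ∈ Icc 0 T, uc k t = 0 := fun k t ht => by
    have h0 : uc k 0 = 0 := by
      have := (hsol k T hTmem).symm
      rw [hcoefT k] at this
      exact (mul_eq_zero.mp this).resolve_right (hEpos k).ne'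
    rw [hsol k t ht, h0, zero_mul]
  intro x hx t ht
  refine tendsto_nhds_unique (hconv.tendsto_at (mk_mem_prod hx ht)) ?_
  simp [hcoef _ t ht]

/-- Uniqueness for the inverse initial problem: if `u` is continuous with uniformly
convergent Fourier–Bessel expansion `u(x,t) = ∑ u_k(t) J₀(λ_k x)`, each `u_k` solving
`^cD^α u_k + λ_k² u_k = 0` (so `u_k(t) = u_k(0) E_α(-λ_k² t^α)` with
`E_α(-λ_k² T^α) > 0`), and `u(·,T) ≡ 0`, then `u ≡ 0` on `[0,1]×[0,T]`; in particular
`u(·,0) ≡ 0`. -/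
theorem inverse_initial_uniqueness
    (a T : ℝ) (ha0 : 0 < a) (ha1 : a < 1) (hT : 0 < T)
    (lam : ℕ → ℝ) (hmono : StrictMono lam)
    (hzero : ∀ k, 0 < lam k ∧ besselJN 0 (lam k) = 0)
    (hall : ∀ x : ℝ, 0 < x → besselJN 0 x = 0 → ∃ k, lam k = x)
    (u : ℝ → ℝ → ℝ) (uc : ℕ → ℝ → ℝ)
    (hcont : ContinuousOn (fun p : ℝ × ℝ => u p.1 p.2)
      (Set.Icc 0 1 ×ˢ Set.Icc 0 T))
    (hconv : TendstoUniformlyOn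
      (fun n p => ∑ k ∈ Finset.range n, uc k p.2 * besselJN 0 (lam k * p.1))
      (fun p : ℝ × ℝ => u p.1 p.2) Filter.atTop (Set.Icc 0 1 ×ˢ Set.Icc 0 T))
    (hode : ∀ k, ∀ t ∈ Set.Ioo 0 T, caputo a (uc k) t + lam k ^ 2 * uc k t = 0)
    (hsol : ∀ k, ∀ t ∈ Set.Icc 0 T, uc k t = uc k 0 * mlReal a (-(lam k ^ 2) * t ^ a))
    (hEpos : ∀ k, 0 < mlReal a (-(lam k ^ 2) * T ^ a))
    (hfinal : ∀ x ∈ Set.Icc (0:ℝ) 1, u x T = 0) :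
    ∀ x ∈ Set.Icc (0:ℝ) 1, ∀ t ∈ Set.Icc 0 T, u x t = 0 :=
  inverse_initial_uniqueness_general a T hT lam hmono hzero u uc hconv hsol hEpos hfinal
end
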